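/- arXiv:2404.12051 — 2 statements merged into one kernel-verified Lean document; each statement's English description precedes it below -/
import Mathlib

section
/- Let V be a complex vector space of dimension 4, W a finite-dimensional complex vector space, and ∂ : Λ²(V^∨) → W^∨ a linear map whose image has dimension at most 4 (equivalently, whose kernel has dimension at least 2). Then there exist a, b ∈ V^∨ with a ∧ b ≠ 0 and ∂(a ∧ b) = 0, i.e., the resonance of ∂ is nontrivial. -/
open Module

/-- The wedge product `a ∧ b` of two vectors, as an element of the second exterior power. -/
noncomputable def wedge2 {M : Type*} [AddCommGroup M] [Module ℂ M] (a b : M) : ⋀[ℂ]^2 M :=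
  ⟨ExteriorAlgebra.ιMulti ℂ 2 ![a, b],
    ExteriorAlgebra.ιMulti_range ℂ 2 (Set.mem_range_self _)⟩

/-- The rank of a quadratic form `q` on a finite-dimensional complex vector space `W`:
the rank of the linear map `W → W^∨` induced by its polar bilinear form
`(x, y) ↦ q (x + y) - q x - q y`. -/
noncomputable def qfRank {W : Type*} [AddCommGroup W] [Module ℂ W]
    (q : QuadraticForm ℂ W) : ℕ :=
  Module.finrank ℂ (LinearMap.range (QuadraticMap.polarBilin q))

/-- The Pfaffian quadratic form associated to six linear functionals
`ℓ₁₂, ℓ₁₃, ℓ₁₄, ℓ₂₃, ℓ₂₄, ℓ₃₄` on `W`: the quadratic form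
`w ↦ ℓ₁₂ w * ℓ₃₄ w - ℓ₁₃ w * ℓ₂₄ w + ℓ₁₄ w * ℓ₂₃ w`. -/
noncomputable def pfaffQF {W : Type*} [AddCommGroup W] [Module ℂ W]
    (l12 l13 l14 l23 l24 l34 : Module.Dual ℂ W) : QuadraticForm ℂ W :=
  QuadraticMap.linMulLin l12 l34 - QuadraticMap.linMulLin l13 l24 +
    QuadraticMap.linMulLin l14 l23

set_option synthInstance.maxHeartbeats 1000000
set_option maxHeartbeats 2000000
set_option linter.unreachableTactic false
set_option linter.unusedTactic false

open ExteriorAlgebra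

noncomputable section
def P6 : Fin 6 → Fin 4 × Fin 4 := ![(0,1),(0,2),(0,3),(1,2),(1,3),(2,3)]

lemma ιMulti_two {M : Type*} [AddCommGroup M] [Module ℂ M] (a b : M) :
    (ιMulti ℂ 2 ![a, b] : ExteriorAlgebra ℂ M) = ι ℂ a * ι ℂ b := by
  simp [ExteriorAlgebra.ιMulti_apply, List.ofFn_succ]

def coordAlt {M : Type*} [AddCommGroup M] [Module ℂ M]
    (g h : M →ₗ[ℂ] ℂ) : M [⋀^Fin 2]→ₗ[ℂ] ℂ where
  toMultilinearMap :=
    (MultilinearMap.mkPiAlgebra ℂ (Fin 2) ℂ).compLinearMap ![g, h] -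
      (MultilinearMap.mkPiAlgebra ℂ (Fin 2) ℂ).compLinearMap ![h, g]
  map_eq_zero_of_eq' := by
    intro v i j hv hij
    have h01 : v 0 = v 1 := by fin_cases i <;> fin_cases j <;> simp_all
    simp [MultilinearMap.compLinearMap_apply, Fin.prod_univ_two, h01]
    ring

def coordFn {M : Type*} [AddCommGroup M] [Module ℂ M]
    (g h : M →ₗ[ℂ] ℂ) : ExteriorAlgebra ℂ M →ₗ[ℂ] ℂ :=
  liftAlternating (Function.update (fun _ => 0) 2 (coordAlt g h))

lemma coordFn_mul {M : Type*} [AddCommGroup M] [Module ℂ M]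
    (g h : M →ₗ[ℂ] ℂ) (a b : M) :
    coordFn g h (ι ℂ a * ι ℂ b) = g a * h b - g b * h a := by
  rw [← ιMulti_two, coordFn, liftAlternating_apply_ιMulti, Function.update_self]
  simp [coordAlt, MultilinearMap.compLinearMap_apply, Fin.prod_univ_two]
  ring

lemma mul_expand {M : Type*} [AddCommGroup M] [Module ℂ M] (e : Fin 4 → M) (x y : Fin 4 → ℂ) :
    ι ℂ (∑ i, x i • e i) * ι ℂ (∑ j, y j • e j) =
      ∑ k, (x (P6 k).1 * y (P6 k).2 - x (P6 k).2 * y (P6 k).1) •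
        (ι ℂ (e (P6 k).1) * ι ℂ (e (P6 k).2)) := by
  have hswap : ∀ i j : Fin 4, ι ℂ (e j) * ι ℂ (e i) = -(ι ℂ (e i) * ι ℂ (e j)) :=
    fun i j => eq_neg_of_add_eq_zero_left (by rw [add_comm]; exact ι_add_mul_swap (e i) (e j))
  simp only [Fin.sum_univ_four, Fin.sum_univ_six, map_add, map_smul, add_mul, mul_add,
    smul_mul_assoc, mul_smul_comm, smul_smul,
    show P6 0 = (0,1) from rfl, show P6 1 = (0,2) from rfl, show P6 2 = (0,3) from rfl,
    show P6 3 = (1,2) from rfl, show P6 4 = (1,3) from rfl, show P6 5 = (2,3) from rfl]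
  rw [hswap 0 1, hswap 0 2, hswap 0 3, hswap 1 2, hswap 1 3, hswap 2 3]
  simp only [ι_sq_zero, smul_zero, smul_neg]
  module

lemma decomp {M : Type*} [AddCommGroup M] [Module ℂ M] (e : Fin 4 → M) (d : Fin 6 → ℂ)
    (hPf : d 0 * d 5 - d 1 * d 4 + d 2 * d 3 = 0) (hd : d ≠ 0) :
    ∃ a b : M, ι ℂ a * ι ℂ b = ∑ k, d k • (ι ℂ (e (P6 k).1) * ι ℂ (e (P6 k).2)) := by
  have key : ∀ x y : Fin 4 → ℂ,
      x 0 * y 1 - x 1 * y 0 = d 0 → x 0 * y 2 - x 2 * y 0 = d 1 →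
      x 0 * y 3 - x 3 * y 0 = d 2 → x 1 * y 2 - x 2 * y 1 = d 3 →
      x 1 * y 3 - x 3 * y 1 = d 4 → x 2 * y 3 - x 3 * y 2 = d 5 →
      ∃ a b : M, ι ℂ a * ι ℂ b = ∑ k, d k • (ι ℂ (e (P6 k).1) * ι ℂ (e (P6 k).2)) := by
    intro x y h0 h1 h2 h3 h4 h5
    refine ⟨∑ i, x i • e i, ∑ i, y i • e i, ?_⟩
    rw [mul_expand]
    refine Finset.sum_congr rfl fun k _ => ?_
    fin_cases k
    exacts [show (x 0 * y 1 - x 1 * y 0) • (ι ℂ (e 0) * ι ℂ (e 1)) = d 0 • (ι ℂ (e 0) * ι ℂ (e 1)) by rw [h0],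
      show (x 0 * y 2 - x 2 * y 0) • (ι ℂ (e 0) * ι ℂ (e 2)) = d 1 • (ι ℂ (e 0) * ι ℂ (e 2)) by rw [h1],
      show (x 0 * y 3 - x 3 * y 0) • (ι ℂ (e 0) * ι ℂ (e 3)) = d 2 • (ι ℂ (e 0) * ι ℂ (e 3)) by rw [h2],
      show (x 1 * y 2 - x 2 * y 1) • (ι ℂ (e 1) * ι ℂ (e 2)) = d 3 • (ι ℂ (e 1) * ι ℂ (e 2)) by rw [h3],
      show (x 1 * y 3 - x 3 * y 1) • (ι ℂ (e 1) * ι ℂ (e 3)) = d 4 • (ι ℂ (e 1) * ι ℂ (e 3)) by rw [h4],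
      show (x 2 * y 3 - x 3 * y 2) • (ι ℂ (e 2) * ι ℂ (e 3)) = d 5 • (ι ℂ (e 2) * ι ℂ (e 3)) by rw [h5]]
  rcases eq_or_ne (d 0) 0 with h0 | h0
  case inr =>
    refine key ![1, 0, -(d 3)/(d 0), -(d 4)/(d 0)] ![0, d 0, d 1, d 2] ?_ ?_ ?_ ?_ ?_ ?_ <;>
      · simp only [Matrix.cons_val_zero, Matrix.cons_val_one, Matrix.head_cons,
          Matrix.cons_val_two, Matrix.tail_cons, Matrix.cons_val_three]
        field_simp
        all_goals first | ring1 | linear_combination hPf | linear_combination -hPf | linear_combination -d 0 * hPf | linear_combination d 0 * hPf | linear_combination -d 1 * hPf | linear_combination d 1 * hPf | linear_combination -d 2 * hPf | linear_combination d 2 * hPf | linear_combination -d 3 * hPf | linear_combination d 3 * hPf | linear_combination -d 4 * hPf | linear_combination d 4 * hPf | linear_combination -d 5 * hPf | linear_combination d 5 * hPf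
  rcases eq_or_ne (d 1) 0 with h1 | h1
  case inr =>
    refine key ![1, (d 3)/(d 1), 0, -(d 5)/(d 1)] ![0, d 0, d 1, d 2] ?_ ?_ ?_ ?_ ?_ ?_ <;>
      · simp only [Matrix.cons_val_zero, Matrix.cons_val_one, Matrix.head_cons,
          Matrix.cons_val_two, Matrix.tail_cons, Matrix.cons_val_three]
        field_simp
        all_goals first | ring1 | linear_combination hPf | linear_combination -hPf | linear_combination -d 0 * hPf | linear_combination d 0 * hPf | linear_combination -d 1 * hPf | linear_combination d 1 * hPf | linear_combination -d 2 * hPf | linear_combination d 2 * hPf | linear_combination -d 3 * hPf | linear_combination d 3 * hPf | linear_combination -d 4 * hPf | linear_combination d 4 * hPf | linear_combination -d 5 * hPf | linear_combination d 5 * hPf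
  rcases eq_or_ne (d 2) 0 with h2 | h2
  case inr =>
    refine key ![1, (d 4)/(d 2), (d 5)/(d 2), 0] ![0, d 0, d 1, d 2] ?_ ?_ ?_ ?_ ?_ ?_ <;>
      · simp only [Matrix.cons_val_zero, Matrix.cons_val_one, Matrix.head_cons,
          Matrix.cons_val_two, Matrix.tail_cons, Matrix.cons_val_three]
        field_simp
        all_goals first | ring1 | linear_combination hPf | linear_combination -hPf | linear_combination -d 0 * hPf | linear_combination d 0 * hPf | linear_combination -d 1 * hPf | linear_combination d 1 * hPf | linear_combination -d 2 * hPf | linear_combination d 2 * hPf | linear_combination -d 3 * hPf | linear_combination d 3 * hPf | linear_combination -d 4 * hPf | linear_combination d 4 * hPf | linear_combination -d 5 * hPf | linear_combination d 5 * hPf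
  rcases eq_or_ne (d 3) 0 with h3 | h3
  case inr =>
    refine key ![(d 1)/(d 3), 1, 0, -(d 5)/(d 3)] ![-(d 0), 0, d 3, d 4] ?_ ?_ ?_ ?_ ?_ ?_ <;>
      · simp only [Matrix.cons_val_zero, Matrix.cons_val_one, Matrix.head_cons,
          Matrix.cons_val_two, Matrix.tail_cons, Matrix.cons_val_three]
        field_simp
        all_goals first | ring1 | linear_combination hPf | linear_combination -hPf | linear_combination -d 0 * hPf | linear_combination d 0 * hPf | linear_combination -d 1 * hPf | linear_combination d 1 * hPf | linear_combination -d 2 * hPf | linear_combination d 2 * hPf | linear_combination -d 3 * hPf | linear_combination d 3 * hPf | linear_combination -d 4 * hPf | linear_combination d 4 * hPf | linear_combination -d 5 * hPf | linear_combination d 5 * hPf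
  rcases eq_or_ne (d 4) 0 with h4 | h4
  case inr =>
    refine key ![(d 2)/(d 4), 1, (d 5)/(d 4), 0] ![-(d 0), 0, d 3, d 4] ?_ ?_ ?_ ?_ ?_ ?_ <;>
      · simp only [Matrix.cons_val_zero, Matrix.cons_val_one, Matrix.head_cons,
          Matrix.cons_val_two, Matrix.tail_cons, Matrix.cons_val_three]
        field_simp
        all_goals first | ring1 | linear_combination hPf | linear_combination -hPf | linear_combination -d 0 * hPf | linear_combination d 0 * hPf | linear_combination -d 1 * hPf | linear_combination d 1 * hPf | linear_combination -d 2 * hPf | linear_combination d 2 * hPf | linear_combination -d 3 * hPf | linear_combination d 3 * hPf | linear_combination -d 4 * hPf | linear_combination d 4 * hPf | linear_combination -d 5 * hPf | linear_combination d 5 * hPf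
  rcases eq_or_ne (d 5) 0 with h5 | h5
  case inr =>
    refine key ![(d 2)/(d 5), (d 4)/(d 5), 1, 0] ![-(d 1), -(d 3), 0, d 5] ?_ ?_ ?_ ?_ ?_ ?_ <;>
      · simp only [Matrix.cons_val_zero, Matrix.cons_val_one, Matrix.head_cons,
          Matrix.cons_val_two, Matrix.tail_cons, Matrix.cons_val_three]
        field_simp
        all_goals first | ring1 | linear_combination hPf | linear_combination -hPf | linear_combination -d 0 * hPf | linear_combination d 0 * hPf | linear_combination -d 1 * hPf | linear_combination d 1 * hPf | linear_combination -d 2 * hPf | linear_combination d 2 * hPf | linear_combination -d 3 * hPf | linear_combination d 3 * hPf | linear_combination -d 4 * hPf | linear_combination d 4 * hPf | linear_combination -d 5 * hPf | linear_combination d 5 * hPf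
  exact absurd (funext fun k => by fin_cases k <;> assumption) hd


lemma quad_root (A B C : ℂ) (hA : A ≠ 0) : ∃ s : ℂ, A * s ^ 2 + B * s + C = 0 := by
  obtain ⟨z, hz⟩ := IsAlgClosed.exists_pow_nat_eq (B ^ 2 - 4 * A * C) two_pos
  refine ⟨(-B + z) / (2 * A), ?_⟩
  field_simp
  linear_combination hz

end

/-- If `V` has dimension `4` and the image of `f : Λ²(V^∨) → W^∨` has dimension
at most `4` (equivalently, its kernel has dimension at least `2`), then the resonance of `f`
is nontrivial: there are `a, b ∈ V^∨` with `a ∧ b ≠ 0` and `f (a ∧ b) = 0`. -/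
theorem resonance_nontrivial_of_image_dim_le_four
    {V W : Type*} [AddCommGroup V] [Module ℂ V] [FiniteDimensional ℂ V]
    [AddCommGroup W] [Module ℂ W] [FiniteDimensional ℂ W]
    (hdim : Module.finrank ℂ V = 4)
    (f : ⋀[ℂ]^2 (Module.Dual ℂ V) →ₗ[ℂ] Module.Dual ℂ W)
    (hrange : Module.finrank ℂ (LinearMap.range f) ≤ 4) :
    ∃ a b : Module.Dual ℂ V, wedge2 a b ≠ 0 ∧ f (wedge2 a b) = 0 := by
  classical
  set v : Basis (Fin 4) ℂ V := finBasisOfFinrankEq ℂ V hdim with hv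
  set e : Basis (Fin 4) ℂ (Dual ℂ V) := v.dualBasis with he
  set E : Fin 6 → (⋀[ℂ]^2 (Dual ℂ V) : Submodule ℂ _) :=
    fun k => wedge2 (e (P6 k).1) (e (P6 k).2) with hE
  have hEval : ∀ k, ((E k : ExteriorAlgebra ℂ (Dual ℂ V))) =
      ι ℂ (e (P6 k).1) * ι ℂ (e (P6 k).2) := fun k => ιMulti_two _ _
  set Φ : (⋀[ℂ]^2 (Dual ℂ V) : Submodule ℂ _) →ₗ[ℂ] (Fin 6 → ℂ) :=
    LinearMap.pi (fun k =>
      (coordFn (Dual.eval ℂ V (v (P6 k).1)) (Dual.eval ℂ V (v (P6 k).2))).comp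
        (Submodule.subtype _)) with hΦ
  have hΦE : ∀ k l, Φ (E k) l = if k = l then 1 else 0 := by
    intro k l
    rw [hΦ]
    simp only [LinearMap.pi_apply, LinearMap.comp_apply, Submodule.subtype_apply, hEval k,
      coordFn_mul, Dual.eval_apply, he, Basis.dualBasis_apply_self]
    fin_cases k <;> fin_cases l <;> norm_num [P6, Fin.ext_iff] <;> decide
  have hEind : LinearIndependent ℂ E := by
    have h1 : LinearIndependent ℂ (Φ ∘ E) := by
      have h2 : (Φ ∘ E) = fun k => Pi.single k (1:ℂ) := by
        funext k l
        rw [Function.comp_apply, hΦE k l, Pi.single_apply]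
        rcases eq_or_ne k l with h | h
        · simp [h]
        · simp [h, h.symm]
      rw [h2]
      have h3 : (fun k => Pi.single k (1:ℂ)) = ⇑(Pi.basisFun ℂ (Fin 6)) := by
        funext k; rw [Pi.basisFun_apply]
      rw [h3]; exact (Pi.basisFun ℂ (Fin 6)).linearIndependent
    exact h1.of_comp Φ
  -- package the six wedges into a linear map from ℂ⁶
  set ψ : (Fin 6 → ℂ) →ₗ[ℂ] ↥(⋀[ℂ]^2 (Dual ℂ V)) :=
    { toFun := fun c => ∑ k, c k • E k,
      map_add' := by intro c₁ c₂; simp [add_smul, Finset.sum_add_distrib],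
      map_smul' := by intro r c; simp [Finset.smul_sum, mul_smul] } with hψ
  have hψ_apply : ∀ c : Fin 6 → ℂ, ψ c = ∑ k, c k • E k := fun c => rfl
  have hψ_inj : ∀ c : Fin 6 → ℂ, ψ c = 0 → c = 0 := by
    intro c hc
    funext k
    exact Fintype.linearIndependent_iff.mp hEind c hc k
  set h : (Fin 6 → ℂ) →ₗ[ℂ] Dual ℂ W := f.comp ψ with hh
  have hker2 : 2 ≤ finrank ℂ (LinearMap.ker h) := by
    have h1 := LinearMap.finrank_range_add_finrank_ker h
    have h2 : finrank ℂ (LinearMap.range h) ≤ 4 :=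
      le_trans (Submodule.finrank_mono (LinearMap.range_comp_le_range ψ f)) hrange
    have h3 : finrank ℂ (Fin 6 → ℂ) = 6 := by simp
    omega
  obtain ⟨cu, cw, hhcu, hhcw, hcune, hswne⟩ :
      ∃ cu cw : Fin 6 → ℂ, h cu = 0 ∧ h cw = 0 ∧ cu ≠ 0 ∧ ∀ s : ℂ, s • cu + cw ≠ 0 := by
    set K := LinearMap.ker h with hK
    set bK : Basis (Fin (finrank ℂ K)) ℂ K := finBasis ℂ K with hbK
    have h0lt : 0 < finrank ℂ K := by omega
    have h1lt : 1 < finrank ℂ K := by omega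
    set u : K := bK ⟨0, h0lt⟩ with hu
    set w : K := bK ⟨1, h1lt⟩ with hw
    have hune : u ≠ 0 := bK.ne_zero _
    have hsw : ∀ s : ℂ, s • u + w ≠ 0 := by
      intro s hst
      have hr := congrArg (fun z => (bK.repr z) ⟨1, h1lt⟩) hst
      simp [hu, hw, Basis.repr_self, Finsupp.single_apply, Fin.ext_iff] at hr
    refine ⟨(u : Fin 6 → ℂ), (w : Fin 6 → ℂ), u.2, w.2, ?_, ?_⟩
    · intro hc
      exact hune (by ext1; rw [hc]; rfl)
    · intro s hc
      refine hsw s ?_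
      ext1
      rw [show ((s • u + w : K) : Fin 6 → ℂ) = s • (u : Fin 6 → ℂ) + (w : Fin 6 → ℂ) from rfl, hc]
      rfl
  obtain ⟨d, hPfd, hdne, hfd⟩ : ∃ d : Fin 6 → ℂ,
      (d 0 * d 5 - d 1 * d 4 + d 2 * d 3 = 0) ∧ d ≠ 0 ∧ h d = 0 := by
    rcases eq_or_ne (cu 0 * cu 5 - cu 1 * cu 4 + cu 2 * cu 3) 0 with hA0 | hA0
    · exact ⟨cu, hA0, hcune, hhcu⟩
    · obtain ⟨s, hs⟩ := quad_root (cu 0 * cu 5 - cu 1 * cu 4 + cu 2 * cu 3)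
        (cu 0 * cw 5 + cw 0 * cu 5 - cu 1 * cw 4 - cw 1 * cu 4 + cu 2 * cw 3 + cw 2 * cu 3)
        (cw 0 * cw 5 - cw 1 * cw 4 + cw 2 * cw 3) hA0
      refine ⟨s • cu + cw, ?_, hswne s, ?_⟩
      · have : ∀ k : Fin 6, (s • cu + cw) k = s * cu k + cw k := fun k => rfl
        simp only [this]
        linear_combination hs
      · rw [map_add, map_smul, hhcu, hhcw, smul_zero, add_zero]
  obtain ⟨a, b, hab⟩ := decomp (M := Dual ℂ V) e d hPfd hdne
  have hwedge : wedge2 a b = ψ d := by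
    apply Subtype.ext
    have h1 : (wedge2 a b : ExteriorAlgebra ℂ (Dual ℂ V)) = ι ℂ a * ι ℂ b := ιMulti_two a b
    rw [h1, hab, hψ_apply]
    have h2 : ((∑ k, d k • E k : ↥(⋀[ℂ]^2 (Dual ℂ V))) : ExteriorAlgebra ℂ (Dual ℂ V)) =
        ∑ k, d k • ((E k : ExteriorAlgebra ℂ (Dual ℂ V))) := by
      push_cast; rfl
    rw [h2]
    exact Finset.sum_congr rfl fun k _ => by rw [hEval k]
  have hne : wedge2 a b ≠ 0 := by
    rw [hwedge]
    intro hc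
    exact hdne (hψ_inj d hc)
  have hfz : f (wedge2 a b) = 0 := by
    rw [hwedge]
    exact hfd
  exact ⟨a, b, hne, hfz⟩
end

section
/- Let V be a complex vector space of dimension 4, W a finite-dimensional complex vector space, and ∂ : Λ²(V^∨) → W^∨ a linear map whose kernel is one-dimensional, spanned by a nonzero element φ ∈ Λ²(V^∨) with φ ∧ φ ≠ 0 in Λ⁴(V^∨). Then for any basis e₁, e₂, e₃, e₄ of V^∨, the associated Pfaffian quadratic form q on W, defined by q(w) = ∂(e₁∧e₂)(w)·∂(e₃∧e₄)(w) − ∂(e₁∧e₃)(w)·∂(e₂∧e₄)(w) + ∂(e₁∧e₄)(w)·∂(e₂∧e₃)(w), has rank at least 5. -/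
open Module ExteriorAlgebra

section
variable {M : Type*} [AddCommGroup M] [Module ℂ M]

lemma z02' (a b c : M) : ιMulti ℂ 4 ![a,b,a,c] = 0 :=
  AlternatingMap.map_eq_zero_of_eq _ _ (i := 0) (j := 2) rfl (by decide)
lemma z03' (a b c : M) : ιMulti ℂ 4 ![a,b,c,a] = 0 :=
  AlternatingMap.map_eq_zero_of_eq _ _ (i := 0) (j := 3) rfl (by decide)
lemma z12' (a b c : M) : ιMulti ℂ 4 ![a,b,b,c] = 0 :=
  AlternatingMap.map_eq_zero_of_eq _ _ (i := 1) (j := 2) rfl (by decide)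
lemma z13' (a b c : M) : ιMulti ℂ 4 ![a,b,c,b] = 0 :=
  AlternatingMap.map_eq_zero_of_eq _ _ (i := 1) (j := 3) rfl (by decide)

lemma prodFour (a b c d : M) :
    (ι ℂ a * ι ℂ b) * (ι ℂ c * ι ℂ d) = ιMulti ℂ 4 ![a, b, c, d] := by
  simp [ιMulti_apply, List.ofFn_succ, mul_assoc]

noncomputable def Efor (e : Basis (Fin 4) ℂ M) : ExteriorAlgebra ℂ M := ιMulti ℂ 4 ⇑e

/-- index pairs -/
def pairF : Fin 6 → Fin 4 × Fin 4
  | 0 => (0,1) | 1 => (0,2) | 2 => (0,3) | 3 => (1,2) | 4 => (1,3) | 5 => (2,3)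

/-- sign table -/
def sgT : Fin 6 → Fin 6 → ℂ
  | 0, 5 => 1 | 5, 0 => 1 | 1, 4 => -1 | 4, 1 => -1 | 2, 3 => 1 | 3, 2 => 1
  | _, _ => 0

variable (e : Basis (Fin 4) ℂ M)

lemma perm_apply (σ : Equiv.Perm (Fin 4)) (v : Fin 4 → M)
    (hv : ∀ m, v m = e (σ m)) :
    ιMulti ℂ 4 v = (Equiv.Perm.sign σ : ℤ) • ιMulti ℂ 4 ⇑e := by
  have h : v = ⇑e ∘ ⇑σ := funext hv
  rw [h, AlternatingMap.map_perm (g := ιMulti ℂ 4) (v := ⇑e) (σ := σ), Units.smul_def]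

lemma c05 : ιMulti ℂ 4 ![e 0, e 1, e 2, e 3] = Efor e := by
  rw [Efor]; congr 1; funext m; fin_cases m <;> rfl

lemma c14 : ιMulti ℂ 4 ![e 0, e 2, e 1, e 3] = -Efor e := by
  rw [perm_apply e (Equiv.swap 1 2) _ (by intro m; fin_cases m <;> rfl)]
  have hs : Equiv.Perm.sign (Equiv.swap (1 : Fin 4) 2) = -1 := by decide
  rw [hs]; simp [Efor]

lemma c23 : ιMulti ℂ 4 ![e 0, e 3, e 1, e 2] = Efor e := by
  rw [perm_apply e (Equiv.swap 2 3 * Equiv.swap 1 2) _ (by intro m; fin_cases m <;> rfl)]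
  have hs : Equiv.Perm.sign (Equiv.swap (2 : Fin 4) 3 * Equiv.swap 1 2) = 1 := by decide
  rw [hs]; simp [Efor]

lemma c32 : ιMulti ℂ 4 ![e 1, e 2, e 0, e 3] = Efor e := by
  rw [perm_apply e (Equiv.swap 0 1 * Equiv.swap 1 2) _ (by intro m; fin_cases m <;> rfl)]
  have hs : Equiv.Perm.sign (Equiv.swap (0 : Fin 4) 1 * Equiv.swap 1 2) = 1 := by decide
  rw [hs]; simp [Efor]

lemma c41 : ιMulti ℂ 4 ![e 1, e 3, e 0, e 2] = -Efor e := by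
  rw [perm_apply e (Equiv.swap 0 1 * Equiv.swap 1 3 * Equiv.swap 2 3) _
    (by intro m; fin_cases m <;> rfl)]
  have hs : Equiv.Perm.sign (Equiv.swap (0 : Fin 4) 1 * Equiv.swap 1 3 * Equiv.swap 2 3) = -1 := by
    decide
  rw [hs]; simp [Efor]

lemma c50 : ιMulti ℂ 4 ![e 2, e 3, e 0, e 1] = Efor e := by
  rw [perm_apply e (Equiv.swap 0 2 * Equiv.swap 1 3) _ (by intro m; fin_cases m <;> rfl)]
  have hs : Equiv.Perm.sign (Equiv.swap (0 : Fin 4) 2 * Equiv.swap 1 3) = 1 := by decide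
  rw [hs]; simp [Efor]

/-- raw wedge products in the exterior algebra -/
noncomputable def WW : Fin 6 → ExteriorAlgebra ℂ M :=
  fun p => ι ℂ (e (pairF p).1) * ι ℂ (e (pairF p).2)

set_option maxHeartbeats 1000000 in
lemma wmul (p q : Fin 6) : WW e p * WW e q = sgT p q • Efor e := by
  fin_cases p <;> fin_cases q <;>
    simp only [WW, pairF, sgT, prodFour, z02', z03', z12', z13', c05, c14, c23, c32, c41, c50,
      zero_smul, one_smul, neg_smul, smul_neg, neg_neg] <;>
    simp [sgT]
end

section Phi
variable {M : Type*} [AddCommGroup M] [Module ℂ M]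

lemma wedge2_coe (a b : M) :
    ((wedge2 a b : ⋀[ℂ]^2 M) : ExteriorAlgebra ℂ M) = ι ℂ a * ι ℂ b := by
  show ιMulti ℂ 2 ![a, b] = _
  simp [ιMulti_apply, List.ofFn_succ]

variable (e : Basis (Fin 4) ℂ M)

noncomputable def wSix : Fin 6 → ⋀[ℂ]^2 M :=
  fun p => wedge2 (e (pairF p).1) (e (pairF p).2)

lemma wSix_coe (p : Fin 6) : ((wSix e p : ⋀[ℂ]^2 M) : ExteriorAlgebra ℂ M) = WW e p :=
  wedge2_coe _ _

noncomputable def PhiL : (Fin 6 → ℂ) →ₗ[ℂ] ⋀[ℂ]^2 M :=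
  ∑ p : Fin 6, (LinearMap.proj p).smulRight (wSix e p)

lemma PhiL_apply (c : Fin 6 → ℂ) : PhiL e c = ∑ p : Fin 6, c p • wSix e p := by
  simp [PhiL]

/-- the polar Pfaffian pairing on coefficient vectors -/
def Bform (c c' : Fin 6 → ℂ) : ℂ :=
  c 0 * c' 5 + c 5 * c' 0 - c 1 * c' 4 - c 4 * c' 1 + c 2 * c' 3 + c 3 * c' 2

lemma Phi_mul (c c' : Fin 6 → ℂ) :
    ((PhiL e c : ⋀[ℂ]^2 M) : ExteriorAlgebra ℂ M) * ((PhiL e c' : ⋀[ℂ]^2 M) : ExteriorAlgebra ℂ M)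
      = Bform c c' • Efor e := by
  have hc : ((PhiL e c : ⋀[ℂ]^2 M) : ExteriorAlgebra ℂ M) = ∑ p : Fin 6, c p • WW e p := by
    rw [PhiL_apply]
    push_cast [Submodule.coe_sum, Submodule.coe_smul]
    simp [wSix_coe]
  have hc' : ((PhiL e c' : ⋀[ℂ]^2 M) : ExteriorAlgebra ℂ M) = ∑ p : Fin 6, c' p • WW e p := by
    rw [PhiL_apply]
    push_cast [Submodule.coe_sum, Submodule.coe_smul]
    simp [wSix_coe]
  rw [hc, hc', Finset.sum_mul_sum]
  have : ∀ p q : Fin 6, (c p • WW e p) * (c' q • WW e q) = (c p * c' q * sgT p q) • Efor e := by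
    intro p q
    rw [smul_mul_smul_comm, wmul, smul_smul, mul_assoc]
  simp only [this, ← Finset.sum_smul]
  congr 1
  simp only [Fin.sum_univ_six, sgT, Bform]
  ring
end Phi

section Inj
variable {M : Type*} [AddCommGroup M] [Module ℂ M] (e : Basis (Fin 4) ℂ M)

lemma Efor_ne_zero : Efor e ≠ 0 := by
  intro h
  have := congrArg (ExteriorAlgebra.liftAlternating
    (Function.update (fun i => (0 : M [⋀^Fin i]→ₗ[ℂ] ℂ)) 4 e.det)) h
  rw [Efor, liftAlternating_apply_ιMulti] at this
  simp [Basis.det_self] at this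

lemma PhiL_injective : Function.Injective (PhiL e) := by
  rw [← LinearMap.ker_eq_bot, LinearMap.ker_eq_bot']
  intro c hc
  have hB : ∀ c' : Fin 6 → ℂ, Bform c c' = 0 := by
    intro c'
    have := Phi_mul e c c'
    rw [hc] at this
    simp only [ZeroMemClass.coe_zero, zero_mul] at this
    rcases smul_eq_zero.mp this.symm with h | h
    · exact h
    · exact absurd h (Efor_ne_zero e)
  funext p
  fin_cases p
  · simpa [Bform, Pi.single_apply] using hB (Pi.single 5 1)
  · have := hB (Pi.single 4 1)
    simp [Bform, Pi.single_apply] at this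
    simpa using this
  · simpa [Bform, Pi.single_apply] using hB (Pi.single 3 1)
  · simpa [Bform, Pi.single_apply] using hB (Pi.single 2 1)
  · have := hB (Pi.single 1 1)
    simp [Bform, Pi.single_apply] at this
    simpa using this
  · simpa [Bform, Pi.single_apply] using hB (Pi.single 0 1)
end Inj


set_option synthInstance.maxHeartbeats 1000000 in
set_option maxHeartbeats 2000000 in
/-- If `V` has dimension `4` and the kernel of `f : Λ²(V^∨) → W^∨` is
one-dimensional, spanned by `φ ≠ 0` with `φ ∧ φ ≠ 0` in `Λ⁴(V^∨)`, then for any basis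
`e₁, e₂, e₃, e₄` of `V^∨` the associated Pfaffian quadratic form on `W` has rank at least
`5`. -/
theorem pfaffian_rank_ge_five_of_nondegenerate_kernel
    {V W : Type*} [AddCommGroup V] [Module ℂ V] [FiniteDimensional ℂ V]
    [AddCommGroup W] [Module ℂ W] [FiniteDimensional ℂ W]
    (hdim : Module.finrank ℂ V = 4)
    (f : ⋀[ℂ]^2 (Module.Dual ℂ V) →ₗ[ℂ] Module.Dual ℂ W)
    (φ : ⋀[ℂ]^2 (Module.Dual ℂ V)) (hφ : φ ≠ 0)
    (hker : LinearMap.ker f = Submodule.span ℂ {φ})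
    (hφφ : (φ : ExteriorAlgebra ℂ (Module.Dual ℂ V)) *
      (φ : ExteriorAlgebra ℂ (Module.Dual ℂ V)) ≠ 0)
    (e : Basis (Fin 4) ℂ (Module.Dual ℂ V)) :
    5 ≤ qfRank (pfaffQF (f (wedge2 (e 0) (e 1))) (f (wedge2 (e 0) (e 2)))
      (f (wedge2 (e 0) (e 3))) (f (wedge2 (e 1) (e 2)))
      (f (wedge2 (e 1) (e 3))) (f (wedge2 (e 2) (e 3)))) := by
  classical
  set ℓ : Fin 6 → Module.Dual ℂ W := fun p => f (wSix e p) with hℓ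
  set q : QuadraticForm ℂ W :=
    pfaffQF (ℓ 0) (ℓ 1) (ℓ 2) (ℓ 3) (ℓ 4) (ℓ 5) with hq
  show 5 ≤ qfRank q
  set Lm : (Fin 6 → ℂ) →ₗ[ℂ] Module.Dual ℂ W := f ∘ₗ PhiL e with hLmdef
  have hLm : ∀ c : Fin 6 → ℂ, Lm c = ∑ p : Fin 6, c p • ℓ p := by
    intro c
    rw [hLmdef, LinearMap.comp_apply, PhiL_apply, map_sum]
    refine Finset.sum_congr rfl fun p _ => ?_
    rw [map_smul]
  set P : W →ₗ[ℂ] (Fin 6 → ℂ) := LinearMap.pi (fun p => (ℓ p : W →ₗ[ℂ] ℂ)) with hP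
  -- polar formula
  have hpolar : ∀ x y : W, QuadraticMap.polar ⇑q x y =
      ℓ 0 x * ℓ 5 y + ℓ 5 x * ℓ 0 y - ℓ 1 x * ℓ 4 y - ℓ 4 x * ℓ 1 y
        + ℓ 2 x * ℓ 3 y + ℓ 3 x * ℓ 2 y := by
    intro x y
    simp only [hq, pfaffQF, QuadraticMap.polar, QuadraticMap.add_apply, QuadraticMap.sub_apply,
      QuadraticMap.linMulLin_apply, map_add]
    ring
  set T := QuadraticMap.polarBilin q with hT
  -- kernels agree
  have hkk : LinearMap.ker T = LinearMap.ker P := by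
    ext w
    simp only [LinearMap.mem_ker]
    constructor
    · intro hw
      have hw' : ∀ y, QuadraticMap.polar ⇑q w y = 0 := by
        intro y
        rw [← QuadraticMap.polarBilin_apply_apply, ← hT, hw]
        rfl
      set m : Fin 6 → ℂ := fun p =>
        match p with
        | 0 => ℓ 5 w | 1 => -(ℓ 4 w) | 2 => ℓ 3 w
        | 3 => ℓ 2 w | 4 => -(ℓ 1 w) | 5 => ℓ 0 w
        with hm
      have hLmm : Lm m = 0 := by
        ext y
        rw [hLm]
        have hthis := hw' y
        rw [hpolar] at hthis
        simp only [LinearMap.sum_apply, LinearMap.smul_apply, smul_eq_mul, Fin.sum_univ_six,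
          LinearMap.zero_apply]
        show ℓ 5 w * ℓ 0 y + -(ℓ 4 w) * ℓ 1 y + ℓ 3 w * ℓ 2 y + ℓ 2 w * ℓ 3 y
          + -(ℓ 1 w) * ℓ 4 y + ℓ 0 w * ℓ 5 y = 0
        linear_combination hthis
      have hmem : PhiL e m ∈ LinearMap.ker f := by
        rw [LinearMap.mem_ker]
        have hfm : f (PhiL e m) = Lm m := rfl
        rw [hfm, hLmm]
      rw [hker, Submodule.mem_span_singleton] at hmem
      obtain ⟨t, ht⟩ := hmem
      by_cases h0 : t = 0
      · rw [h0, zero_smul] at ht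
        have hm0 : m = 0 := by
          apply PhiL_injective e
          rw [← ht, map_zero]
        have hc : ∀ j : Fin 6, m j = 0 := fun j => congrFun hm0 j
        funext p
        fin_cases p <;> simp only [hP, LinearMap.pi_apply, Pi.zero_apply]
        · exact hc 5
        · exact neg_eq_zero.mp (hc 4)
        · exact hc 3
        · exact hc 2
        · exact neg_eq_zero.mp (hc 1)
        · exact hc 0
      · exfalso
        have hφeq : φ = PhiL e (t⁻¹ • m) := by
          rw [map_smul, ← ht, smul_smul, inv_mul_cancel₀ h0, one_smul]
        have hBm : Bform m m = 0 := by
          have hthis := hw' w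
          rw [hpolar] at hthis
          show ℓ 5 w * ℓ 0 w + ℓ 0 w * ℓ 5 w - -(ℓ 4 w) * -(ℓ 1 w) - -(ℓ 1 w) * -(ℓ 4 w)
            + ℓ 3 w * ℓ 2 w + ℓ 2 w * ℓ 3 w = 0
          linear_combination hthis
        apply hφφ
        rw [hφeq, Phi_mul]
        have hscale : Bform (t⁻¹ • m) (t⁻¹ • m) = t⁻¹ * t⁻¹ * Bform m m := by
          simp only [Bform, Pi.smul_apply, smul_eq_mul]
          ring
        rw [hscale, hBm, mul_zero, zero_smul]
    · intro hw
      have h0 : ∀ p, ℓ p w = 0 := by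
        intro p
        have := congrFun hw p
        simpa [hP] using this
      ext y
      simp only [hT, QuadraticMap.polarBilin_apply_apply, LinearMap.zero_apply]
      rw [hpolar]
      simp [h0]
  -- rank of Lm is at least 5
  have hkerLm : Module.finrank ℂ (LinearMap.ker Lm) ≤ 1 := by
    have hsub : ∀ x : LinearMap.ker Lm, PhiL e x.1 ∈ Submodule.span ℂ {φ} := by
      intro x
      rw [← hker, LinearMap.mem_ker]
      exact x.2
    set g : LinearMap.ker Lm →ₗ[ℂ] Submodule.span ℂ {φ} :=
      LinearMap.codRestrict _ ((PhiL e) ∘ₗ (LinearMap.ker Lm).subtype) hsub with hg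
    have hginj : Function.Injective g := by
      intro a b hab
      have : PhiL e a.1 = PhiL e b.1 := congrArg Subtype.val hab
      exact Subtype.ext (PhiL_injective e this)
    calc Module.finrank ℂ (LinearMap.ker Lm)
        ≤ Module.finrank ℂ (Submodule.span ℂ {φ}) :=
          LinearMap.finrank_le_finrank_of_injective hginj
      _ = 1 := finrank_span_singleton hφ
  have hrangeLm : 5 ≤ Module.finrank ℂ (LinearMap.range Lm) := by
    have := LinearMap.finrank_range_add_finrank_ker Lm
    rw [Module.finrank_pi] at this
    simp only [Fintype.card_fin] at this
    omega
  -- rank of P equals rank of Lm, via duality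
  have hPLm : Module.finrank ℂ (LinearMap.range P) = Module.finrank ℂ (LinearMap.range Lm) := by
    set b := Pi.basisFun ℂ (Fin 6) with hb
    have hb1 : ∀ p : Fin 6, Lm (b p) = ℓ p := by
      intro p
      rw [hLm]
      have : ∀ q : Fin 6, (b p : Fin 6 → ℂ) q = if q = p then 1 else 0 := by
        intro q
        simp [hb, Pi.basisFun_apply, Pi.single_apply]
      simp only [this]
      rw [Finset.sum_congr rfl (fun q _ => by rw [ite_smul, one_smul, zero_smul])]
      simp
    have hfact : P = (b.dualBasis.equivFun :
          Module.Dual ℂ (Fin 6 → ℂ) ≃ₗ[ℂ] (Fin 6 → ℂ)).toLinearMap ∘ₗ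
        Lm.dualMap ∘ₗ (Module.evalEquiv ℂ W).toLinearMap := by
      ext w p
      simp only [hP, LinearMap.pi_apply, LinearMap.coe_comp, LinearEquiv.coe_coe,
        Function.comp_apply, Basis.dualBasis_equivFun, LinearMap.dualMap_apply,
        Module.evalEquiv_apply, Module.Dual.eval_apply, hb1]
    rw [hfact]
    rw [LinearMap.range_comp, LinearMap.range_comp_of_range_eq_top _ (LinearEquiv.range _)]
    rw [LinearEquiv.finrank_map_eq]
    exact LinearMap.finrank_range_dualMap_eq_finrank_range Lm
  have r1 := LinearMap.finrank_range_add_finrank_ker T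
  have r2 := LinearMap.finrank_range_add_finrank_ker P
  rw [hkk] at r1
  have hqr : qfRank q = Module.finrank ℂ (LinearMap.range T) := rfl
  omega
end
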